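/- For every natural number n and real a > 0 and b > 0, the integral from 0 to a of P_{2n+1}(y/a)·sin(by) dy equals (−1)^n·√(πa/(2b))·J_{2n+3/2}(ab). -/

import Mathlib

open Polynomial MeasureTheory intervalIntegral

/-- Legendre polynomials via Bonnet recursion. -/
noncomputable def legendre : ℕ → Polynomial ℝ
  | 0 => 1
  | 1 => X
  | (n + 2) => C ((2 * (n:ℝ) + 3) / ((n:ℝ) + 2)) * X * legendre (n + 1)
      - C (((n:ℝ) + 1) / ((n:ℝ) + 2)) * legendre n


/-- Bessel function of the first kind of real order (for positive argument),
defined via its power series using the real power function. -/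
noncomputable def besselJ (ν : ℝ) (x : ℝ) : ℝ :=
  ∑' k : ℕ, ((-1) ^ k / ((Nat.factorial k : ℝ) * Real.Gamma ((k : ℝ) + ν + 1))) *
    (x / 2) ^ (2 * (k : ℝ) + ν)

/-! Expand `sin (b y)` in its Taylor series and integrate termwise; after the substitution
`y = a x` the `k`-th term carries the moment `∫₀¹ x^(2k+1) P_{2n+1}(x) dx`. Bonnet's recursion
determines these moments: `∫₀¹ x^s P_m = 0` for `s < m` of the same parity, and
`∫₀¹ x^(m+2j) P_m = (m+2j)! / ((2j)‼ (2m+2j+1)‼)`. The surviving series is, up to the factor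
`√(2x/π)`, the power series of `J_{m+1/2}(x)`, whose Gamma values at half-integers are double
factorials. -/

open scoped Nat Real

theorem hasSum_intervalIntegral_mul_sin {f : ℝ → ℝ} (hf : Continuous f) (a b ω : ℝ) :
    HasSum (fun k : ℕ => (-1) ^ k * ω ^ (2 * k + 1) / (2 * k + 1)! *
        ∫ t in a..b, f t * t ^ (2 * k + 1))
      (∫ t in a..b, f t * Real.sin (ω * t)) := by
  obtain ⟨C, hC⟩ := (isCompact_uIcc (a := a) (b := b)).exists_bound_of_continuousOn
    hf.continuousOn
  obtain ⟨R, hR⟩ := (isCompact_uIcc (a := a) (b := b)).exists_bound_of_continuousOn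
    continuousOn_id
  have hC₀ : 0 ≤ C := (norm_nonneg _).trans (hC a Set.left_mem_uIcc)
  simp_rw [← intervalIntegral.integral_const_mul]
  refine intervalIntegral.hasSum_integral_of_dominated_convergence
    (fun k _ => C * ((|ω| * R) ^ (2 * k + 1) / (2 * k + 1)!))
    (fun k => (by fun_prop : Continuous _).aestronglyMeasurable)
    (fun k => ae_of_all _ fun t ht => ?_)
    (ae_of_all _ fun _ _ => (Real.hasSum_sinh _).summable.mul_left C)
    intervalIntegrable_const
    (ae_of_all _ fun t _ => ?_)
  · have hft := hC t (Set.uIoc_subset_uIcc ht)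
    have ht : |t| ≤ R := hR t (Set.uIoc_subset_uIcc ht)
    simp only [norm_mul, norm_div, norm_pow, norm_neg, norm_one, one_pow, one_mul,
      Real.norm_eq_abs, Nat.abs_cast] at hft ⊢
    calc _ = |f t| * |t| ^ (2 * k + 1) * (|ω| ^ (2 * k + 1) / (2 * k + 1)!) := by ring
      _ ≤ C * R ^ (2 * k + 1) * (|ω| ^ (2 * k + 1) / (2 * k + 1)!) := by gcongr
      _ = _ := by ring
  · have hterm : ∀ k : ℕ, f t * ((-1) ^ k * (ω * t) ^ (2 * k + 1) / (2 * k + 1)!) =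
        (-1) ^ k * ω ^ (2 * k + 1) / (2 * k + 1)! * (f t * t ^ (2 * k + 1)) := fun k => by ring
    simpa only [hterm] using (Real.hasSum_sin (ω * t)).mul_left (f t)

theorem intervalIntegral_comp_div_mul_pow (f : ℝ → ℝ) {a : ℝ} (ha : a ≠ 0) (s : ℕ) :
    ∫ y in (0:ℝ)..a, f (y / a) * y ^ s = a ^ (s + 1) * ∫ x in (0:ℝ)..1, x ^ s * f x := by
  calc ∫ y in (0:ℝ)..a, f (y / a) * y ^ s
      = ∫ y in (0:ℝ)..a, (fun x => (a * x) ^ s * f x) (y / a) :=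
        intervalIntegral.integral_congr fun y _ => by
          beta_reduce
          rw [mul_div_cancel₀ _ ha, mul_comm]
    _ = a * ∫ x in (0:ℝ)..1, a ^ s * (x ^ s * f x) := by
        rw [intervalIntegral.integral_comp_div (fun x => (a * x) ^ s * f x) ha, zero_div,
          div_self ha, smul_eq_mul]
        simp_rw [mul_pow, mul_assoc]
    _ = a ^ (s + 1) * ∫ x in (0:ℝ)..1, x ^ s * f x := by
        rw [intervalIntegral.integral_const_mul, pow_succ]
        ring

noncomputable def legendreMoment (m s : ℕ) : ℝ :=
  ∫ x in (0:ℝ)..1, x ^ s * (legendre m).eval x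

theorem legendreMoment_add_two (m s : ℕ) :
    legendreMoment (m + 2) s = (2 * m + 3) / (m + 2) * legendreMoment (m + 1) (s + 1)
      - (m + 1) / (m + 2) * legendreMoment m s := by
  have hint : ∀ k r, IntervalIntegrable (fun x : ℝ => x ^ r * (legendre k).eval x) volume 0 1 :=
    fun k r => ((continuous_pow r).mul (legendre k).continuous).intervalIntegrable _ _
  rw [legendreMoment, legendreMoment, legendreMoment, ← intervalIntegral.integral_const_mul,
    ← intervalIntegral.integral_const_mul,
    ← integral_sub ((hint _ _).const_mul _) ((hint _ _).const_mul _)]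
  congr 1 with x
  simp only [legendre, eval_sub, eval_mul, eval_C, eval_X]
  ring

theorem legendreMoment_zero (s : ℕ) : legendreMoment 0 s = 1 / (s + 1) := by
  simp [legendreMoment, legendre, integral_pow]

theorem legendreMoment_one (s : ℕ) : legendreMoment 1 s = 1 / (s + 2) := by
  simp only [legendreMoment, legendre, eval_X, ← pow_succ, integral_pow]
  norm_num
  ring

theorem legendreMoment_add_two_mul (m j : ℕ) :
    legendreMoment m (m + 2 * j) = (m + 2 * j)! / ((2 * j)‼ * (2 * m + 2 * j + 1)‼) := by
  have hodd (i : ℕ) : ((2 * i + 1)‼ * (2 * i)‼ : ℝ) = (2 * i + 1) * (2 * i)! := by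
    exact_mod_cast (Nat.factorial_eq_mul_doubleFactorial _).symm.trans (Nat.factorial_succ _)
  induction m using Nat.twoStepInduction generalizing j with
  | zero =>
    rw [legendreMoment_zero, zero_add, mul_zero, zero_add]
    field_simp
    push_cast
    linear_combination hodd j
  | one =>
    rw [legendreMoment_one, show 2 * 1 + 2 * j + 1 = 2 * j + 1 + 2 by ring,
      Nat.doubleFactorial_add_two, add_comm 1]
    field_simp
    push_cast [Nat.factorial_succ]
    linear_combination (2 * (j:ℝ) + 3) * hodd j
  | more m ih₀ ih₁ =>
    rw [legendreMoment_add_two, show m + 2 + 2 * j + 1 = m + 1 + 2 * (j + 1) by ring,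
      show m + 2 + 2 * j = m + 2 * (j + 1) by ring, ih₀, ih₁,
      show m + 1 + 2 * (j + 1) = m + 2 * j + 3 by ring,
      show m + 2 * (j + 1) = m + 2 * j + 2 by ring,
      show 2 * (m + 1) + 2 * (j + 1) + 1 = 2 * m + 2 * j + 5 by ring,
      show 2 * m + 2 * (j + 1) + 1 = 2 * m + 2 * j + 3 by ring,
      show 2 * (m + 2) + 2 * j + 1 = 2 * m + 2 * j + 5 by ring,
      show 2 * (j + 1) = 2 * j + 2 by ring]
    push_cast [Nat.factorial_succ, Nat.doubleFactorial_add_two]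
    field_simp
    ring

theorem legendreMoment_eq_zero_of_lt {m s : ℕ} (hsm : s < m) (hpar : s % 2 = m % 2) :
    legendreMoment m s = 0 := by
  obtain ⟨i, rfl⟩ : ∃ i, m = s + 2 * i + 2 := ⟨(m - s) / 2 - 1, by omega⟩
  clear hsm hpar
  induction i generalizing s with
  | zero =>
    have h₀ := legendreMoment_add_two_mul s 0
    have h₁ := legendreMoment_add_two_mul (s + 1) 0
    simp only [mul_zero, add_zero] at h₀ h₁ ⊢
    rw [legendreMoment_add_two, h₀, h₁, show 2 * (s + 1) + 1 = 2 * s + 1 + 2 by ring]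
    push_cast [Nat.factorial_succ, Nat.doubleFactorial_add_two]
    field_simp
    ring
  | succ i ih =>
    rw [show s + 2 * (i + 1) + 2 = s + 2 * i + 2 + 2 by ring, legendreMoment_add_two,
      show s + 2 * i + 2 + 1 = s + 1 + 2 * i + 2 by ring, ih, ih, mul_zero, mul_zero, sub_zero]

open Real in
theorem besselJ_nat_add_half (N : ℕ) {x : ℝ} (hx : 0 ≤ x) :
    besselJ (N + 1 / 2) x = √(2 * x / π) *
      ∑' k : ℕ, (-1) ^ k * x ^ (2 * k + N) / ((2 * k)‼ * (2 * N + 2 * k + 1)‼) := by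
  have hsqrt : √(2 * x / π) = 2 * √(x / 2) / √π := by
    rw [show 2 * x / π = 2 ^ 2 * (x / 2) / π by ring, sqrt_div' _ pi_pos.le,
      sqrt_mul (by norm_num), sqrt_sq (by norm_num)]
  rw [besselJ, ← tsum_mul_left]
  refine tsum_congr fun k => ?_
  rw [show (k : ℝ) + (N + 1 / 2) + 1 = ((k + N : ℕ) : ℝ) + 1 + 1 / 2 by push_cast; ring,
    Gamma_nat_add_one_add_half,
    show 2 * (k : ℝ) + (N + 1 / 2) = ((2 * k + N : ℕ) : ℝ) + 1 / 2 by push_cast; ring,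
    rpow_add' (by positivity) (by positivity), rpow_natCast, div_pow, ← sqrt_eq_rpow,
    Nat.doubleFactorial_two_mul, hsqrt, show 2 * (k + N) + 1 = 2 * N + 2 * k + 1 by ring]
  have : √π ≠ 0 := by positivity
  push_cast
  field_simp
  ring

theorem legendre_sin_integral (n : ℕ) (a b : ℝ) (ha : 0 < a) (hb : 0 < b) :
    ∫ y in (0:ℝ)..a, (legendre (2 * n + 1)).eval (y / a) * Real.sin (b * y)
      = (-1) ^ n * Real.sqrt (Real.pi * a / (2 * b)) * besselJ (2 * n + 3 / 2) (a * b) := by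
  set m := 2 * n + 1 with hm
  have hsum := hasSum_intervalIntegral_mul_sin
    (f := fun y => (legendre m).eval (y / a)) (by fun_prop) 0 a b
  have hmoment : ∀ s, ∫ y in (0:ℝ)..a, (legendre m).eval (y / a) * y ^ s =
      a ^ (s + 1) * legendreMoment m s :=
    intervalIntegral_comp_div_mul_pow (fun x => (legendre m).eval x) ha.ne'
  simp only [hmoment] at hsum
  rw [← hasSum_nat_add_iff' n, Finset.sum_eq_zero fun k hk => by
    rw [legendreMoment_eq_zero_of_lt (by simp at hk; omega) (by omega), mul_zero, mul_zero],
    sub_zero] at hsum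
  have hterm : ∀ j : ℕ, (-1) ^ (j + n) * b ^ (2 * (j + n) + 1) / (2 * (j + n) + 1)! *
      (a ^ (2 * (j + n) + 1 + 1) * legendreMoment m (2 * (j + n) + 1)) =
      (-1) ^ n * a *
        ((-1) ^ j * (a * b) ^ (2 * j + m) / ((2 * j)‼ * (2 * m + 2 * j + 1)‼)) := by
    intro j
    rw [show 2 * (j + n) + 1 = m + 2 * j by omega, legendreMoment_add_two_mul]
    field_simp
    ring
  simp only [hterm] at hsum
  have hsqrt : ∀ S, √(π * a / (2 * b)) * (√(2 * (a * b) / π) * S) = a * S := fun S => by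
    rw [← mul_assoc, ← Real.sqrt_mul (by positivity),
      show π * a / (2 * b) * (2 * (a * b) / π) = a ^ 2 by field_simp, Real.sqrt_sq ha.le]
  rw [show (2 * n + 3 / 2 : ℝ) = (m : ℕ) + 1 / 2 by rw [hm]; push_cast; ring,
    besselJ_nat_add_half m (by positivity), ← hsum.tsum_eq, tsum_mul_left,
    mul_assoc _ √_, hsqrt, mul_assoc]
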